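/- Fix r ≤ n, orthonormal vectors u₁, …, u_r ∈ ℝⁿ, and d ≥ 2. Identify each real polynomial φ in r variables of total degree ≤ d with its coefficient vector c ∈ ℝ^N in the monomial basis, where N = binom(r+d, d). For such φ set F_φ(x) := φ(⟨u₁, x⟩, …, ⟨u_r, x⟩), define sym(F_φ) := { (S, v) ∈ ℝ^{n×n} × ℝⁿ : Sᵀ = −S and DF_φ(x)(S x + v) = 0 for all x ∈ ℝⁿ }, and let 𝔤_lin := { (S, v) : Sᵀ = −S, S u_i = 0 for all i, and ⟨u_i, v⟩ = 0 for all i }. Then the set of coefficient vectors c ∈ ℝ^N for which sym(F_φ) ≠ 𝔤_lin has Lebesgue measure zero. -/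

import Mathlib

open Matrix MeasureTheory

/-- The index type for the monomial basis of polynomials in `r` variables of total degree
at most `d`: a monomial of degree `k ≤ d` is a multiset of `k` variables.  This type has
exactly `(r+d).choose d` elements. -/
abbrev MonIdx (r d : ℕ) := Σ k : Fin (d + 1), Sym (Fin r) k

/-- The polynomial function in `r` variables determined by a coefficient vector in the
monomial basis: `φ_c(z) = Σ_{monomials p} c_p · Π_{i ∈ p} z_i`. -/
noncomputable def polyOfCoeffs {r d : ℕ} (coeffs : MonIdx r d → ℝ) :
    (Fin r → ℝ) → ℝ :=
  fun z => ∑ p : MonIdx r d, coeffs p * ((p.2 : Multiset (Fin r)).map z).prod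

/-- The linear-feature function `F(x) = φ(⟨u₁,x⟩, …, ⟨u_r,x⟩)`. -/
noncomputable def linFeat {n r : ℕ} (u : Fin r → Fin n → ℝ)
    (φ : (Fin r → ℝ) → ℝ) : (Fin n → ℝ) → ℝ :=
  fun x => φ (fun i => ∑ j, u i j * x j)

/-- The infinitesimal `SE(n)`-symmetries of a scalar function `G` on `ℝⁿ`: pairs `(S, v)`
with `S` skew-symmetric and `DG(x)(Sx + v) = 0` for all `x`. -/
def symSet {n : ℕ} (G : (Fin n → ℝ) → ℝ) :
    Set (Matrix (Fin n) (Fin n) ℝ × (Fin n → ℝ)) :=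
  {p | (p.1)ᵀ = -p.1 ∧ ∀ x : Fin n → ℝ, fderiv ℝ G x (p.1.mulVec x + p.2) = 0}

/-- The subalgebra `𝔤_lin = {(S,v) : Sᵀ = −S, S uᵢ = 0 ∀i, ⟨uᵢ, v⟩ = 0 ∀i}`. -/
def gLin {n r : ℕ} (u : Fin r → Fin n → ℝ) :
    Set (Matrix (Fin n) (Fin n) ℝ × (Fin n → ℝ)) :=
  {p | (p.1)ᵀ = -p.1 ∧ (∀ i : Fin r, p.1.mulVec (u i) = 0) ∧
    ∀ i : Fin r, ∑ j, u i j * p.2 j = 0}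

/-! The symmetry condition for `F = φ ∘ U` (with `U Uᵀ = 1`) pulls back along `U` to an
infinitesimal `SE(r)`-symmetry of `φ`; so whenever `φ` itself has no nonzero symmetry, those of
`F` are exactly `𝔤_lin`. To see that a generic polynomial `φ` has none, evaluate the symmetry
condition at `r(r+1)/2` test points against a basis of `𝔰𝔢(r)`: this gives a square matrix, linear
in the coefficients of `φ`, that must kill the coordinates of any symmetry. Its determinant is a
polynomial in the coefficients, nonzero because it does not vanish at the diagonal quadratic
form `Σ (i+1) zᵢ²`, and the zero set of a nonzero polynomial is Lebesgue-null. -/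

namespace MvPolynomial

theorem ae_eval_ne_zero_of_fin {n : ℕ} {p : MvPolynomial (Fin n) ℝ} (hp : p ≠ 0) :
    ∀ᵐ x : Fin n → ℝ, eval x p ≠ 0 := by
  induction n with
  | zero =>
    obtain ⟨a, rfl⟩ := C_surjective (Fin 0) p
    exact .of_forall fun x => by simpa using hp
  | succ n ih =>
    set q := finSuccEquiv ℝ n p
    have hq : q ≠ 0 := (map_ne_zero_iff _ (finSuccEquiv ℝ n).injective).mpr hp
    -- Off the null set where the leading coefficient of `q` vanishes, `y ↦ p (y, s)` is a
    -- nonzero polynomial, with finitely many roots.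
    have hroots : ∀ᵐ s : Fin n → ℝ, ∀ᵐ y : ℝ, eval (Fin.cons y s) p ≠ 0 := by
      filter_upwards [ih (Polynomial.leadingCoeff_ne_zero.mpr hq)] with s hs
      have hqs : q.map (eval s) ≠ 0 := fun h => hs (by
        simpa [Polynomial.coeff_map] using congrArg (Polynomial.coeff · q.natDegree) h)
      refine measure_mono_null (fun y hy => ?_)
        ((Polynomial.finite_setOfPred_isRoot hqs).measure_zero _)
      simpa [eval_eq_eval_mv_eval'] using hy
    have hmeas : MeasurableSet {x : ℝ × (Fin n → ℝ) | eval (Fin.cons x.1 x.2) p ≠ 0} :=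
      (isOpen_ne_fun (continuous_eval p |>.comp (by fun_prop)) continuous_const).measurableSet
    have hprod : ∀ᵐ x : ℝ × (Fin n → ℝ), eval (Fin.cons x.1 x.2) p ≠ 0 :=
      (Measure.ae_prod_iff_ae_ae hmeas).mpr ((Measure.ae_ae_comm hmeas).mpr hroots)
    simpa using (volume_preserving_piFinSuccAbove (fun _ => ℝ) 0).quasiMeasurePreserving.ae hprod

theorem ae_eval_ne_zero {σ : Type*} [Fintype σ] {p : MvPolynomial σ ℝ} (hp : p ≠ 0) :
    ∀ᵐ x : σ → ℝ, eval x p ≠ 0 := by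
  set e := Fintype.equivFin σ
  have h : ∀ᵐ y : Fin (Fintype.card σ) → ℝ, eval y (rename e p) ≠ 0 :=
    ae_eval_ne_zero_of_fin ((map_ne_zero_iff _ (rename_injective _ e.injective)).mpr hp)
  filter_upwards [(volume_measurePreserving_piCongrLeft (fun _ => ℝ) e).quasiMeasurePreserving.ae h]
    with x hx
  simpa [eval_rename, Function.comp_def, MeasurableEquiv.coe_piCongrLeft,
    Equiv.piCongrLeft_apply_apply] using hx

end MvPolynomial

theorem ae_det_map_eval_ne_zero {ι κ : Type*} [Fintype ι] [Fintype κ] [DecidableEq κ]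
    {A : Matrix κ κ (MvPolynomial ι ℝ)} {c₀ : ι → ℝ}
    (h : (A.map (MvPolynomial.eval c₀)).det ≠ 0) :
    ∀ᵐ c : ι → ℝ, (A.map (MvPolynomial.eval c)).det ≠ 0 := by
  have hA : A.det ≠ 0 := fun h0 => h (by
    rw [← RingHom.mapMatrix_apply, ← RingHom.map_det, h0, map_zero])
  filter_upwards [MvPolynomial.ae_eval_ne_zero hA] with c hc
  rwa [← RingHom.mapMatrix_apply, ← RingHom.map_det]

section TestMatrix

variable {r : ℕ}

lemma sum_skew_smul_single {M : Matrix (Fin r) (Fin r) ℝ} (hM : Mᵀ = -M) :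
    ∑ q : {p : Fin r × Fin r // p.1 < p.2},
      M q.1.1 q.1.2 • (single q.1.1 q.1.2 1 - single q.1.2 q.1.1 (1 : ℝ)) = M := by
  have hMs : ∀ a b, M b a = -M a b := fun a b => by simpa using congr_fun₂ hM a b
  ext a b
  simp only [Matrix.sum_apply, Matrix.smul_apply, Matrix.sub_apply, single_apply, smul_eq_mul]
  rcases lt_trichotomy a b with h | rfl | h
  · rw [Fintype.sum_eq_single ⟨(a, b), h⟩ fun q hq => ?_]
    · simp [h.ne']
    · have h1 : ¬(q.1.1 = a ∧ q.1.2 = b) := fun ⟨h1, h2⟩ => hq (Subtype.ext (Prod.ext h1 h2))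
      have h2 : ¬(q.1.2 = a ∧ q.1.1 = b) := fun ⟨h1, h2⟩ => (h1 ▸ h2 ▸ q.2).not_gt h
      simp [h1, h2]
  · simp only [and_comm, sub_self, mul_zero, Finset.sum_const_zero]
    linarith [hMs a a]
  · rw [Fintype.sum_eq_single ⟨(b, a), h⟩ fun q hq => ?_]
    · simp [h.ne', hMs a b]
    · have h1 : ¬(q.1.1 = a ∧ q.1.2 = b) := fun ⟨h1, h2⟩ => (h1 ▸ h2 ▸ q.2).not_gt h
      have h2 : ¬(q.1.2 = a ∧ q.1.1 = b) := fun ⟨h1, h2⟩ => hq (Subtype.ext (Prod.ext h2 h1))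
      simp [h1, h2]

/-- A pair `a < b` stands for the rotation generator `E_ab - E_ba` of `𝔰𝔢(r)`, an index `k` for
the translation `e_k`. -/
abbrev TestIdx (r : ℕ) := {p : Fin r × Fin r // p.1 < p.2} ⊕ Fin r

def generator : TestIdx r → Matrix (Fin r) (Fin r) ℝ × (Fin r → ℝ)
  | .inl p => (single p.1.1 p.1.2 1 - single p.1.2 p.1.1 1, 0)
  | .inr k => (0, Pi.single k 1)

def generatorCoords (p : Matrix (Fin r) (Fin r) ℝ × (Fin r → ℝ)) : TestIdx r → ℝ :=
  Sum.elim (fun q => p.1 q.1.1 q.1.2) p.2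

lemma sum_generatorCoords_smul {p : Matrix (Fin r) (Fin r) ℝ × (Fin r → ℝ)}
    (hp : p.1ᵀ = -p.1) : ∑ j, generatorCoords p j • generator j = p := by
  rw [Fintype.sum_sum_type]
  ext : 1
  · simp [generatorCoords, generator, Prod.fst_sum, sum_skew_smul_single hp]
  · ext i
    simp [generatorCoords, generator, Prod.snd_sum, Pi.single_apply]

lemma sum_smul_mulVec_add {ι : Type*} [Fintype ι] (c : ι → ℝ)
    (g : ι → Matrix (Fin r) (Fin r) ℝ × (Fin r → ℝ)) (x : Fin r → ℝ) :
    ∑ i, c i • ((g i).1 *ᵥ x + (g i).2) = (∑ i, c i • g i).1 *ᵥ x + (∑ i, c i • g i).2 := by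
  simp only [Prod.fst_sum, Prod.snd_sum, Prod.smul_fst, Prod.smul_snd, sum_mulVec, smul_mulVec,
    smul_add, Finset.sum_add_distrib]

def testPoint : TestIdx r → Fin r → ℝ
  | .inl p => Pi.single p.1.1 1 + Pi.single p.1.2 1
  | .inr k => Pi.single k 1

noncomputable def testMatrix (φ : (Fin r → ℝ) → ℝ) : Matrix (TestIdx r) (TestIdx r) ℝ :=
  of fun z j => fderiv ℝ φ (testPoint z) ((generator j).1 *ᵥ testPoint z + (generator j).2)

lemma zero_mem_symSet {n : ℕ} (G : (Fin n → ℝ) → ℝ) : 0 ∈ symSet G :=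
  ⟨by simp, fun x => by simp⟩

lemma symSet_eq_zero_of_det_testMatrix_ne_zero {φ : (Fin r → ℝ) → ℝ}
    (h : (testMatrix φ).det ≠ 0) : symSet φ = {0} := by
  refine Set.eq_singleton_iff_unique_mem.mpr ⟨zero_mem_symSet φ, fun p ⟨hskew, hp⟩ => ?_⟩
  have hker : testMatrix φ *ᵥ generatorCoords p = 0 := by
    ext z
    have hact := sum_smul_mulVec_add (generatorCoords p) generator (testPoint z)
    rw [sum_generatorCoords_smul hskew] at hact
    calc (testMatrix φ *ᵥ generatorCoords p) z
        = fderiv ℝ φ (testPoint z) (∑ j, generatorCoords p j •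
            ((generator j).1 *ᵥ testPoint z + (generator j).2)) := by
          simp only [map_sum, map_smul, smul_eq_mul, mulVec, dotProduct, testMatrix, of_apply,
            mul_comm]
      _ = 0 := by rw [hact]; exact hp _
  rw [← sum_generatorCoords_smul hskew, eq_zero_of_mulVec_eq_zero h hker]
  simp

end TestMatrix

section PolyOfCoeffs

variable {r d : ℕ}

lemma differentiable_multiset_prod_map (m : Multiset (Fin r)) :
    Differentiable ℝ fun z : Fin r → ℝ => (m.map z).prod := fun x =>
  (HasFDerivAt.multiset_prod (g := fun i (z : Fin r → ℝ) => z i)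
    fun i _ => hasFDerivAt_apply i x).differentiableAt

lemma differentiable_polyOfCoeffs (c : MonIdx r d → ℝ) : Differentiable ℝ (polyOfCoeffs c) :=
  Differentiable.fun_sum fun _ _ => (differentiable_multiset_prod_map _).const_mul _

lemma fderiv_polyOfCoeffs (c : MonIdx r d → ℝ) (z : Fin r → ℝ) :
    fderiv ℝ (polyOfCoeffs c) z
      = ∑ p, c p • fderiv ℝ (fun z : Fin r → ℝ => ((p.2 : Multiset (Fin r)).map z).prod) z := by
  unfold polyOfCoeffs
  rw [fderiv_fun_sum fun p _ =>
    ((differentiable_multiset_prod_map _).const_mul _).differentiableAt]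
  exact Finset.sum_congr rfl fun p _ =>
    fderiv_const_mul (differentiable_multiset_prod_map _).differentiableAt _

noncomputable def testMatrixPoly (r d : ℕ) :
    Matrix (TestIdx r) (TestIdx r) (MvPolynomial (MonIdx r d) ℝ) :=
  of fun z j => ∑ p : MonIdx r d,
    MvPolynomial.C (testMatrix (fun x : Fin r → ℝ => ((p.2 : Multiset (Fin r)).map x).prod) z j) *
      MvPolynomial.X p

lemma testMatrix_polyOfCoeffs (c : MonIdx r d → ℝ) :
    testMatrix (polyOfCoeffs c) = (testMatrixPoly r d).map (MvPolynomial.eval c) := by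
  ext z j
  simp [testMatrix, testMatrixPoly, fderiv_polyOfCoeffs, mul_comm]

end PolyOfCoeffs

section DiagQuadForm

variable {r : ℕ}

def diagQuadForm (a : Fin r → ℝ) (z : Fin r → ℝ) : ℝ := ∑ i, a i * z i ^ 2

lemma fderiv_diagQuadForm (a : Fin r → ℝ) (x y : Fin r → ℝ) :
    fderiv ℝ (diagQuadForm a) x y = ∑ i, 2 * a i * x i * y i := by
  have h : HasFDerivAt (diagQuadForm a)
      (∑ i, (2 * a i * x i) • ContinuousLinearMap.proj (R := ℝ) (φ := fun _ : Fin r => ℝ) i) x := by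
    refine HasFDerivAt.fun_sum fun i _ => ?_
    refine (((ContinuousLinearMap.proj (R := ℝ) (φ := fun _ : Fin r => ℝ) i).hasFDerivAt.pow
      2).const_mul (a i)).congr_fderiv ?_
    ext y
    simp only [ContinuousLinearMap.proj_apply, Nat.add_one_sub_one, pow_one, nsmul_eq_mul,
      Nat.cast_ofNat, _root_.smul_apply, smul_eq_mul]
    ring
  simp [h.fderiv]

lemma testMatrix_diagQuadForm_apply (a : Fin r → ℝ) (z j : TestIdx r) :
    testMatrix (diagQuadForm a) z j = Sum.elim
      (fun q => 2 * (a q.1.1 - a q.1.2) * (testPoint z q.1.1 * testPoint z q.1.2))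
      (fun k => 2 * a k * testPoint z k) j := by
  rcases j with q | k
  · simp only [testMatrix, generator, fderiv_diagQuadForm, Pi.add_apply, of_apply, sub_mulVec,
      single_mulVec_eq, one_mul, Pi.sub_apply, Pi.smul_apply, Pi.single_apply, smul_eq_mul,
      mul_ite, mul_one, mul_zero, Pi.zero_apply, add_zero, mul_sub, Finset.sum_sub_distrib,
      Finset.sum_ite_eq', Finset.mem_univ, ↓reduceIte, Sum.elim_inl]
    ring
  · simp [testMatrix, generator, fderiv_diagQuadForm, Pi.single_apply]

lemma testPoint_inl_mul_testPoint_inl (p q : {p : Fin r × Fin r // p.1 < p.2}) :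
    testPoint (.inl p) q.1.1 * testPoint (.inl p) q.1.2 = if p = q then 1 else 0 := by
  obtain ⟨⟨a, b⟩, hab⟩ := p
  obtain ⟨⟨c, d⟩, hcd⟩ := q
  simp only [testPoint, Pi.add_apply, Pi.single_apply, Subtype.mk.injEq, Prod.mk.injEq]
  split_ifs <;> simp only [Fin.ext_iff, Fin.lt_def] at * <;> first | omega | norm_num

/-- The test matrix of `Σ aᵢ zᵢ²` is block upper triangular, with diagonal entries
`2 (a_p - a_q)` (`p < q`) and `2 a_k`. -/
lemma det_testMatrix_diagQuadForm_ne_zero {a : Fin r → ℝ} (ha : Function.Injective a)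
    (ha0 : ∀ i, a i ≠ 0) : (testMatrix (diagQuadForm a)).det ≠ 0 := by
  have h₁₁ : (testMatrix (diagQuadForm a)).toBlocks₁₁ =
      diagonal fun q : {p : Fin r × Fin r // p.1 < p.2} => 2 * (a q.1.1 - a q.1.2) := by
    ext p q
    by_cases h : p = q <;>
      simp [toBlocks₁₁, testMatrix_diagQuadForm_apply, testPoint_inl_mul_testPoint_inl, h]
  have h₂₁ : (testMatrix (diagQuadForm a)).toBlocks₂₁ = 0 := by
    ext k q
    simp only [toBlocks₂₁, testMatrix_diagQuadForm_apply, testPoint, Pi.single_apply, mul_ite,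
      mul_one, mul_zero, Sum.elim_inl, of_apply, Matrix.zero_apply, ite_eq_right_iff, mul_eq_zero,
      OfNat.ofNat_ne_zero, false_or]
    intro h₂ h₁
    exact absurd (h₁.trans h₂.symm) q.2.ne
  have h₂₂ : (testMatrix (diagQuadForm a)).toBlocks₂₂ = diagonal fun k => 2 * a k := by
    ext k m
    by_cases h : k = m <;>
      simp [toBlocks₂₂, testMatrix_diagQuadForm_apply, testPoint, Pi.single_apply, h, eq_comm]
  rw [← fromBlocks_toBlocks (testMatrix _), h₁₁, h₂₁, h₂₂, det_fromBlocks_zero₂₁, det_diagonal,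
    det_diagonal]
  refine mul_ne_zero (Finset.prod_ne_zero_iff.mpr fun q _ => ?_)
    (Finset.prod_ne_zero_iff.mpr fun k _ => mul_ne_zero two_ne_zero (ha0 k))
  exact mul_ne_zero two_ne_zero (sub_ne_zero.mpr (ha.ne q.2.ne))

def sqIdx {d : ℕ} (hd : 2 ≤ d) (i : Fin r) : MonIdx r d := ⟨⟨2, by omega⟩, Sym.replicate 2 i⟩

noncomputable def diagQuadCoeffs {d : ℕ} (hd : 2 ≤ d) (a : Fin r → ℝ) : MonIdx r d → ℝ :=
  ∑ i, Pi.single (sqIdx hd i) (a i)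

lemma polyOfCoeffs_diagQuadCoeffs {d : ℕ} (hd : 2 ≤ d) (a : Fin r → ℝ) :
    polyOfCoeffs (diagQuadCoeffs hd a) = diagQuadForm a := by
  ext z
  simp only [polyOfCoeffs, diagQuadCoeffs, diagQuadForm, Finset.sum_apply, Finset.sum_mul]
  rw [Finset.sum_comm]
  refine Finset.sum_congr rfl fun i _ => ?_
  simp [Pi.single_apply, sqIdx, Sym.coe_replicate, sq]

end DiagQuadForm

lemma ae_det_testMatrix_polyOfCoeffs_ne_zero {r d : ℕ} (hd : 2 ≤ d) :
    ∀ᵐ c : MonIdx r d → ℝ, (testMatrix (polyOfCoeffs c)).det ≠ 0 := by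
  simp_rw [testMatrix_polyOfCoeffs]
  refine ae_det_map_eval_ne_zero (c₀ := diagQuadCoeffs hd fun i => (i : ℝ) + 1) ?_
  rw [← testMatrix_polyOfCoeffs, polyOfCoeffs_diagQuadCoeffs]
  exact det_testMatrix_diagQuadForm_ne_zero (fun i j h => by simpa [Fin.ext_iff] using h)
    fun i => by positivity

section LinearFeatures

variable {n r : ℕ} {u : Fin r → Fin n → ℝ}

lemma of_mul_transpose_eq_one
    (hu : ∀ i j : Fin r, (∑ k, u i k * u j k) = if i = j then (1 : ℝ) else 0) :
    of u * (of u)ᵀ = 1 := by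
  ext i j
  simpa [mul_apply, one_apply] using hu i j

lemma fderiv_linFeat {φ : (Fin r → ℝ) → ℝ} (hφ : Differentiable ℝ φ) (x y : Fin n → ℝ) :
    fderiv ℝ (linFeat u φ) x y = fderiv ℝ φ (of u *ᵥ x) (of u *ᵥ y) := by
  have h : linFeat u φ = φ ∘ (mulVecLin (of u)).toContinuousLinearMap := rfl
  rw [h, fderiv_comp x hφ.differentiableAt (ContinuousLinearMap.differentiableAt _),
    ContinuousLinearMap.fderiv]
  rfl

lemma mem_gLin_iff {S : Matrix (Fin n) (Fin n) ℝ} {v : Fin n → ℝ} :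
    (S, v) ∈ gLin u ↔ Sᵀ = -S ∧ of u * S = 0 ∧ of u *ᵥ v = 0 := by
  refine and_congr_right fun (hS : Sᵀ = -S) =>
    and_congr ?_ (by simp [funext_iff, mulVec, dotProduct])
  have hcols : (∀ i, S *ᵥ u i = 0) ↔ S * (of u)ᵀ = 0 := by
    simp only [← Matrix.ext_iff, funext_iff, mul_apply, mulVec, dotProduct, transpose_apply,
      of_apply, Matrix.zero_apply, Pi.zero_apply]
    exact forall_comm
  rw [hcols, ← transpose_eq_zero, transpose_mul, transpose_transpose, hS, Matrix.mul_neg,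
    neg_eq_zero]

lemma mem_symSet_of_mem_symSet_linFeat (hu : of u * (of u)ᵀ = 1) {φ : (Fin r → ℝ) → ℝ}
    (hφ : Differentiable ℝ φ) {S : Matrix (Fin n) (Fin n) ℝ} {v : Fin n → ℝ}
    (h : (S, v) ∈ symSet (linFeat u φ)) (y : Fin n → ℝ) :
    (of u * S * (of u)ᵀ, of u *ᵥ v + (of u * S) *ᵥ (y - (of u)ᵀ *ᵥ (of u *ᵥ y))) ∈ symSet φ := by
  refine ⟨by simp [transpose_mul, h.1, Matrix.mul_assoc], fun z => ?_⟩
  -- `U x = z`, while the second summand `y - Uᵀ U y` sweeps out `ker U`.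
  set x := (of u)ᵀ *ᵥ z + (y - (of u)ᵀ *ᵥ (of u *ᵥ y))
  have hx : of u *ᵥ x = z := by
    simp [x, mulVec_add, mulVec_sub, mulVec_mulVec, ← Matrix.mul_assoc, hu]
  have hSx : of u *ᵥ (S *ᵥ x + v) = (of u * S * (of u)ᵀ) *ᵥ z
      + (of u *ᵥ v + (of u * S) *ᵥ (y - (of u)ᵀ *ᵥ (of u *ᵥ y))) := by
    simp only [x, ← mulVec_mulVec, mulVec_add]
    abel
  simpa [fderiv_linFeat hφ, hx, hSx] using h.2 x

lemma symSet_linFeat_eq_gLin (hu : of u * (of u)ᵀ = 1) {φ : (Fin r → ℝ) → ℝ}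
    (hφ : Differentiable ℝ φ) (hsym : symSet φ = {0}) : symSet (linFeat u φ) = gLin u := by
  ext ⟨S, v⟩
  rw [mem_gLin_iff]
  constructor
  · intro h
    have hzero := fun y => hsym ▸ mem_symSet_of_mem_symSet_linFeat hu hφ h y
    simp only [Set.mem_singleton_iff, Prod.mk_eq_zero] at hzero
    have hv : of u *ᵥ v = 0 := by simpa using (hzero 0).2
    refine ⟨h.1, ext_of_mulVec_single fun i => ?_, hv⟩
    have hy := (hzero (Pi.single i 1)).2
    rw [zero_mulVec]
    rwa [hv, zero_add, mulVec_sub, mulVec_mulVec, mulVec_mulVec, (hzero 0).1, Matrix.zero_mul,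
      zero_mulVec, sub_zero] at hy
  · rintro ⟨hS, hUS, hv⟩
    refine ⟨hS, fun x => ?_⟩
    rw [fderiv_linFeat hφ, mulVec_add, mulVec_mulVec, hUS, zero_mulVec, zero_add, hv, map_zero]

end LinearFeatures

theorem stmt14_general (n r d : ℕ) (hd : 2 ≤ d) (u : Fin r → Fin n → ℝ)
    (hu : ∀ i j : Fin r, (∑ k, u i k * u j k) = if i = j then (1 : ℝ) else 0) :
    volume {coeffs : MonIdx r d → ℝ |
        symSet (linFeat u (polyOfCoeffs coeffs)) ≠ gLin u} = 0 := by
  refine ae_iff.mp <| (ae_det_testMatrix_polyOfCoeffs_ne_zero hd).mono fun c hc => ?_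
  exact symSet_linFeat_eq_gLin (of_mul_transpose_eq_one hu) (differentiable_polyOfCoeffs c)
    (symSet_eq_zero_of_det_testMatrix_ne_zero hc)

/-- For orthonormal `u₁, …, u_r` and `d ≥ 2`, the set of coefficient
vectors `c` of polynomials `φ` of total degree `≤ d` for which `sym(F_φ) ≠ 𝔤_lin` has
Lebesgue measure zero. -/
theorem stmt14 (n r d : ℕ) (hrn : r ≤ n) (hd : 2 ≤ d) (u : Fin r → Fin n → ℝ)
    (hu : ∀ i j : Fin r, (∑ k, u i k * u j k) = if i = j then (1 : ℝ) else 0) :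
    volume {coeffs : MonIdx r d → ℝ |
        symSet (linFeat u (polyOfCoeffs coeffs)) ≠ gLin u} = 0 :=
  stmt14_general n r d hd u hu
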